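/- Geometric Brascamp–Lieb for pairwise projections: for p ∈ ℕ and functions f_{j,k} ∈ L¹(𝕋² × 𝕋²), 1 ≤ j < k ≤ 2p, one has ∫_{(𝕋²)^{2p}} ∏_{1 ≤ j < k ≤ 2p} |f_{j,k}(x_j, x_k)|^{1/(2p−1)} dx ≤ C ∏_{1 ≤ j < k ≤ 2p} ( ∫_{(𝕋²)²} |f_{j,k}(x_j, x_k)| dx_j dx_k )^{1/(2p−1)}. -/

import Mathlib

open MeasureTheory
open scoped ENNReal

noncomputable section

instance : Fact (0 < 2 * Real.pi) := ⟨by positivity⟩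

/-- The two-dimensional torus `𝕋² = (ℝ/2πℤ)²`. -/
abbrev Torus2 : Type := AddCircle (2 * Real.pi) × AddCircle (2 * Real.pi)

open Finset

/-! ### Auxiliary integration lemmas -/

theorem BL.lintegral_fin_prod_eq_prod {n : ℕ} {E : Fin n → Type*}
    [∀ i, MeasureSpace (E i)] [∀ i, SigmaFinite (volume : Measure (E i))]
    (f : (i : Fin n) → E i → ℝ≥0∞) (hf : ∀ i, Measurable (f i)) :
    ∫⁻ x : (i : Fin n) → E i, ∏ i, f i (x i) = ∏ i, ∫⁻ x, f i x := by
  induction n with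
  | zero => simp [lintegral_const, volume_pi, Measure.pi_univ]
  | succ n ih =>
      calc
        _ = ∫⁻ x : E 0 × ((i : Fin n) → E (Fin.succ i)),
            f 0 x.1 * ∏ i : Fin n, f (Fin.succ i) (x.2 i) := by
          rw [((volume_preserving_piFinSuccAbove E 0).symm).lintegral_map_equiv
            (f := fun x => ∏ i, f i (x i))]
          congr 1 with x
          simp_rw [MeasurableEquiv.piFinSuccAbove_symm_apply, Fin.insertNthEquiv,
            Fin.prod_univ_succ, Fin.insertNth_zero, Equiv.coe_fn_mk, Fin.cons_succ,
            Fin.cons_zero]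
          rfl
        _ = (∫⁻ x, f 0 x) * ∏ i : Fin n, ∫⁻ (x : E (Fin.succ i)), f (Fin.succ i) x := by
          rw [Measure.volume_eq_prod, lintegral_prod_mul (f := f 0)
            (g := fun y : (i : Fin n) → E (Fin.succ i) => ∏ i : Fin n, f i.succ (y i))
            ((hf 0).aemeasurable)
            (Finset.measurable_prod Finset.univ
              (fun i _ => (hf i.succ).comp (measurable_pi_apply i))).aemeasurable]
          rw [ih (fun i => f (Fin.succ i)) (fun i => hf _)]
        _ = ∏ i, ∫⁻ x, f i x := (Fin.prod_univ_succ (fun i => ∫⁻ x : E i, f i x)).symm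

theorem BL.lintegral_pair_prod {p n : ℕ} {E : Type*} [MeasureSpace E]
    [SigmaFinite (volume : Measure E)]
    (e : Fin p ⊕ Fin p ≃ Fin n) (H : Fin p → E × E → ℝ≥0∞) (hH : ∀ a, Measurable (H a)) :
    ∫⁻ x : Fin n → E, ∏ a, H a (x (e (.inl a)), x (e (.inr a)))
      = ∏ a, ∫⁻ z, H a z := by
  rw [(volume_measurePreserving_piCongrLeft (fun _ : Fin n => E) e).lintegral_map_equiv
    (fun x => ∏ a, H a (x (e (.inl a)), x (e (.inr a)))) _]
  simp_rw [MeasurableEquiv.coe_piCongrLeft, Equiv.piCongrLeft_apply_apply]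
  rw [(volume_measurePreserving_sumPiEquivProdPi_symm
      (fun _ : Fin p ⊕ Fin p => E)).lintegral_map_equiv
    (fun y => ∏ a, H a (y (.inl a), y (.inr a))) _]
  simp_rw [MeasurableEquiv.coe_sumPiEquivProdPi_symm, Equiv.sumPiEquivProdPi_symm_apply]
  rw [(volume_measurePreserving_arrowProdEquivProdArrow E E (Fin p)).lintegral_map_equiv
    (fun z : (Fin p → E) × (Fin p → E) => ∏ a, H a (z.1 a, z.2 a)) _]
  simp_rw [MeasurableEquiv.arrowProdEquivProdArrow, MeasurableEquiv.coe_mk,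
    Equiv.arrowProdEquivProdArrow, Equiv.coe_fn_mk]
  rw [BL.lintegral_fin_prod_eq_prod (fun a (z : E × E) => H a z) hH]

/-! ### Combinatorics: random pairings of `Fin (2 * p)` -/

def BL.pairIdx (p : ℕ) : Fin p ⊕ Fin p ≃ Fin (2 * p) :=
  finSumFinEquiv.trans (finCongr (two_mul p).symm)

open BL in
def BL.phiPair (p : ℕ) (s : Equiv.Perm (Fin (2 * p)) × Fin p) : Fin (2 * p) × Fin (2 * p) :=
  if s.1 (pairIdx p (.inl s.2)) < s.1 (pairIdx p (.inr s.2))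
  then (s.1 (pairIdx p (.inl s.2)), s.1 (pairIdx p (.inr s.2)))
  else (s.1 (pairIdx p (.inr s.2)), s.1 (pairIdx p (.inl s.2)))

namespace BL

lemma pairIdx_ne (p : ℕ) (a : Fin p) : pairIdx p (.inl a) ≠ pairIdx p (.inr a) :=
  (pairIdx p).injective.ne (by simp)

lemma phiPair_ne (p : ℕ) (s : Equiv.Perm (Fin (2 * p)) × Fin p) :
    s.1 (pairIdx p (.inl s.2)) ≠ s.1 (pairIdx p (.inr s.2)) :=
  s.1.injective.ne (pairIdx_ne p s.2)

lemma phiPair_lt (p : ℕ) (s : Equiv.Perm (Fin (2 * p)) × Fin p) :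
    (phiPair p s).1 < (phiPair p s).2 := by
  unfold phiPair
  split_ifs with h
  · exact h
  · exact lt_of_le_of_ne (not_lt.mp h) (phiPair_ne p s).symm

lemma phiPair_eq_iff (p : ℕ) (σ : Equiv.Perm (Fin (2 * p))) (a : Fin p)
    {q : Fin (2 * p) × Fin (2 * p)} (hq : q.1 < q.2) :
    phiPair p (σ, a) = q ↔
      (σ (pairIdx p (.inl a)) = q.1 ∧ σ (pairIdx p (.inr a)) = q.2) ∨
      (σ (pairIdx p (.inl a)) = q.2 ∧ σ (pairIdx p (.inr a)) = q.1) := by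
  unfold phiPair
  split_ifs with h
  · rw [Prod.ext_iff]
    constructor
    · exact fun h' => Or.inl h'
    · rintro (h' | ⟨h1, h2⟩)
      · exact h'
      · exact absurd (h1 ▸ h2 ▸ h) (lt_asymm hq)
  · rw [Prod.ext_iff]
    constructor
    · exact fun h' => Or.inr ⟨h'.2, h'.1⟩
    · rintro (⟨h1, h2⟩ | h')
      · exact absurd hq (h1 ▸ h2 ▸ not_lt.mpr (not_lt.mp h))
      · exact ⟨h'.2, h'.1⟩

lemma exists_perm_pair' {α : Type*} [DecidableEq α] {j k j' k' : α}
    (hjk : j ≠ k) (h' : j' ≠ k') : ∃ π : Equiv.Perm α, π j = j' ∧ π k = k' := by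
  refine ⟨Equiv.swap (Equiv.swap j j' k) k' * Equiv.swap j j', ?_, ?_⟩
  · have h1 : Equiv.swap j j' j = j' := Equiv.swap_apply_left j j'
    have h2 : Equiv.swap j j' k ≠ Equiv.swap j j' j := (Equiv.swap j j').injective.ne hjk.symm
    rw [h1] at h2
    simp only [Equiv.Perm.mul_apply, h1]
    exact Equiv.swap_apply_of_ne_of_ne h2.symm h'
  · simp only [Equiv.Perm.mul_apply]
    exact Equiv.swap_apply_left _ _

lemma card_perm_pair {α : Type*} [Fintype α] [DecidableEq α] {u v y y' : α}
    (huv : u ≠ v) (hyy' : y ≠ y') :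
    (univ.filter fun σ : Equiv.Perm α => σ u = y ∧ σ v = y').card
      * (univ : Finset α).offDiag.card = (Fintype.card α).factorial := by
  have hfib : ∀ q ∈ (univ : Finset α).offDiag,
      (univ.filter fun σ : Equiv.Perm α => (σ u, σ v) = q).card
        = (univ.filter fun σ : Equiv.Perm α => σ u = y ∧ σ v = y').card := by
    rintro ⟨z, z'⟩ hq
    obtain ⟨-, -, hne⟩ := Finset.mem_offDiag.mp hq
    obtain ⟨π, hπ1, hπ2⟩ := exists_perm_pair' hne hyy'
    refine Finset.card_bij' (fun σ _ => π * σ) (fun τ _ => π⁻¹ * τ) ?_ ?_ ?_ ?_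
    · intro σ hσ
      simp only [mem_filter, mem_univ, true_and, Prod.mk.injEq] at hσ ⊢
      exact ⟨by simp [Equiv.Perm.mul_apply, hσ.1, hπ1], by simp [Equiv.Perm.mul_apply, hσ.2, hπ2]⟩
    · intro τ hτ
      simp only [mem_filter, mem_univ, true_and, Prod.mk.injEq] at hτ ⊢
      constructor
      · simp [Equiv.Perm.mul_apply, hτ.1, ← hπ1]
      · simp [Equiv.Perm.mul_apply, hτ.2, ← hπ2]
    · intro σ _; simp [mul_assoc]
    · intro τ _; simp [mul_assoc]
  have hsum := Finset.card_eq_sum_card_fiberwise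
    (f := fun σ : Equiv.Perm α => (σ u, σ v)) (s := univ) (t := (univ : Finset α).offDiag)
    (fun σ _ => Finset.mem_offDiag.mpr ⟨mem_univ _, mem_univ _, σ.injective.ne huv⟩)
  rw [Finset.sum_congr rfl hfib, Finset.sum_const, smul_eq_mul, Finset.card_univ,
    Fintype.card_perm] at hsum
  rw [mul_comm] at hsum
  exact hsum.symm

lemma phiPair_fiber_card (p : ℕ) (hp : 1 ≤ p) {q : Fin (2 * p) × Fin (2 * p)} (hq : q.1 < q.2) :
    (univ.filter fun s : Equiv.Perm (Fin (2 * p)) × Fin p => phiPair p s = q).card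
      * (2 * p - 1) = (2 * p).factorial := by
  have hoff : ((univ : Finset (Fin (2 * p))).offDiag.card) = 2 * p * (2 * p - 1) := by
    rw [Finset.offDiag_card, Finset.card_univ, Fintype.card_fin]
    obtain ⟨k, hk⟩ : ∃ k, 2 * p = k + 1 := ⟨2 * p - 1, by omega⟩
    rw [hk, Nat.succ_sub_one, Nat.mul_succ, Nat.add_sub_cancel]
  have hslice : ∀ a : Fin p,
      (univ.filter fun σ : Equiv.Perm (Fin (2 * p)) => phiPair p (σ, a) = q).card
        * ((univ : Finset (Fin (2 * p))).offDiag.card) = 2 * (2 * p).factorial := by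
    intro a
    have : (univ.filter fun σ : Equiv.Perm (Fin (2 * p)) => phiPair p (σ, a) = q)
        = (univ.filter fun σ : Equiv.Perm (Fin (2 * p)) =>
            σ (pairIdx p (.inl a)) = q.1 ∧ σ (pairIdx p (.inr a)) = q.2)
          ∪ (univ.filter fun σ : Equiv.Perm (Fin (2 * p)) =>
            σ (pairIdx p (.inl a)) = q.2 ∧ σ (pairIdx p (.inr a)) = q.1) := by
      rw [← Finset.filter_or]
      exact Finset.filter_congr fun σ _ => by rw [phiPair_eq_iff p σ a hq]
    have hdisj : Disjoint
        (univ.filter fun σ : Equiv.Perm (Fin (2 * p)) =>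
            σ (pairIdx p (.inl a)) = q.1 ∧ σ (pairIdx p (.inr a)) = q.2)
        (univ.filter fun σ : Equiv.Perm (Fin (2 * p)) =>
            σ (pairIdx p (.inl a)) = q.2 ∧ σ (pairIdx p (.inr a)) = q.1) := by
      rw [Finset.disjoint_left]
      rintro σ h1 h2
      simp only [mem_filter, mem_univ, true_and] at h1 h2
      exact absurd (h1.1 ▸ h2.1 : q.1 = q.2) hq.ne
    rw [this, Finset.card_union_of_disjoint hdisj, add_mul,
      card_perm_pair (pairIdx_ne p a) hq.ne, card_perm_pair (pairIdx_ne p a) hq.ne',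
      Fintype.card_fin]
    omega
  have hsplit : (univ.filter fun s : Equiv.Perm (Fin (2 * p)) × Fin p => phiPair p s = q).card
      = ∑ a : Fin p,
        (univ.filter fun σ : Equiv.Perm (Fin (2 * p)) => phiPair p (σ, a) = q).card := by
    rw [Finset.card_eq_sum_card_fiberwise
      (f := Prod.snd) (t := (univ : Finset (Fin p))) (fun _ _ => mem_univ _)]
    refine Finset.sum_congr rfl fun a _ => ?_
    refine Finset.card_bij' (fun s _ => s.1) (fun σ _ => (σ, a)) ?_ ?_ ?_ ?_
    · rintro ⟨σ, b⟩ hs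
      simp only [mem_filter, mem_univ, true_and] at hs ⊢
      rw [← hs.2]
      exact hs.1
    · intro σ hσ
      simp only [mem_filter, mem_univ, true_and] at hσ ⊢
      exact ⟨hσ, trivial⟩
    · rintro ⟨σ, b⟩ hs
      simp only [mem_filter, mem_univ, true_and] at hs
      show (σ, a) = (σ, b)
      rw [hs.2]
    · intro σ _; rfl
  have key : (univ.filter fun s : Equiv.Perm (Fin (2 * p)) × Fin p => phiPair p s = q).card
      * (2 * p * (2 * p - 1)) = 2 * p * (2 * p).factorial := by
    calc _ = (∑ a : Fin p,
          (univ.filter fun σ : Equiv.Perm (Fin (2 * p)) => phiPair p (σ, a) = q).card)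
          * ((univ : Finset (Fin (2 * p))).offDiag.card) := by rw [hsplit, hoff]
      _ = ∑ a : Fin p,
          (univ.filter fun σ : Equiv.Perm (Fin (2 * p)) => phiPair p (σ, a) = q).card
            * ((univ : Finset (Fin (2 * p))).offDiag.card) := Finset.sum_mul ..
      _ = ∑ _a : Fin p, 2 * (2 * p).factorial := Finset.sum_congr rfl fun a _ => hslice a
      _ = p * (2 * (2 * p).factorial) := by
          rw [Finset.sum_const, Finset.card_univ, Fintype.card_fin, smul_eq_mul]
      _ = 2 * p * (2 * p).factorial := by ring
  apply Nat.eq_of_mul_eq_mul_left (show 0 < 2 * p by omega)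
  rw [← key]
  generalize (2 * p - 1) = k
  ring

set_option maxHeartbeats 2000000 in
/-- Regrouping a product over all permutations and pair slots as a product over
ordered pairs. -/
lemma regroup (p : ℕ) (hp : 1 ≤ p) (h : Fin (2 * p) × Fin (2 * p) → ℝ≥0∞) :
    ∏ σ : Equiv.Perm (Fin (2 * p)),
        (∏ a : Fin p, h (phiPair p (σ, a))) ^ (((2 * p).factorial : ℝ))⁻¹
      = ∏ q ∈ univ.filter (fun q : Fin (2 * p) × Fin (2 * p) => q.1 < q.2),
          h q ^ ((1 : ℝ) / (2 * (p : ℝ) - 1)) := by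
  have hw : (0:ℝ) ≤ (((2 * p).factorial : ℝ))⁻¹ := by positivity
  calc ∏ σ : Equiv.Perm (Fin (2 * p)),
        (∏ a : Fin p, h (phiPair p (σ, a))) ^ (((2 * p).factorial : ℝ))⁻¹
      = ∏ σ : Equiv.Perm (Fin (2 * p)), ∏ a : Fin p,
          h (phiPair p (σ, a)) ^ (((2 * p).factorial : ℝ))⁻¹ :=
        Finset.prod_congr rfl fun σ _ => (ENNReal.prod_rpow_of_nonneg hw).symm
    _ = ∏ s : Equiv.Perm (Fin (2 * p)) × Fin p,
          h (phiPair p s) ^ (((2 * p).factorial : ℝ))⁻¹ :=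
        (Fintype.prod_prod_type
          (fun s : Equiv.Perm (Fin (2 * p)) × Fin p =>
            h (phiPair p s) ^ (((2 * p).factorial : ℝ))⁻¹)).symm
    _ = ∏ q ∈ univ.filter (fun q : Fin (2 * p) × Fin (2 * p) => q.1 < q.2),
          ∏ s ∈ univ.filter (fun s : Equiv.Perm (Fin (2 * p)) × Fin p => phiPair p s = q),
            h (phiPair p s) ^ (((2 * p).factorial : ℝ))⁻¹ :=
        (Finset.prod_fiberwise_of_maps_to
          (fun s _ => mem_filter.mpr ⟨mem_univ _, phiPair_lt p s⟩) _).symm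
    _ = ∏ q ∈ univ.filter (fun q : Fin (2 * p) × Fin (2 * p) => q.1 < q.2),
          h q ^ ((1 : ℝ) / (2 * (p : ℝ) - 1)) := by
        refine Finset.prod_congr rfl fun q hq => ?_
        have hqlt : q.1 < q.2 := (mem_filter.mp hq).2
        have h1 : ∏ s ∈ univ.filter (fun s : Equiv.Perm (Fin (2 * p)) × Fin p =>
              phiPair p s = q), h (phiPair p s) ^ (((2 * p).factorial : ℝ))⁻¹
            = (h q ^ (((2 * p).factorial : ℝ))⁻¹)
                ^ (univ.filter (fun s : Equiv.Perm (Fin (2 * p)) × Fin p =>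
                    phiPair p s = q)).card := by
          rw [← Finset.prod_const]
          exact Finset.prod_congr rfl fun s hs => by rw [(mem_filter.mp hs).2]
        rw [h1, ← ENNReal.rpow_natCast, ← ENNReal.rpow_mul]
        congr 1
        have hcard := phiPair_fiber_card p hp hqlt
        have hcast : ((univ.filter fun s : Equiv.Perm (Fin (2 * p)) × Fin p =>
            phiPair p s = q).card : ℝ) * (2 * (p : ℝ) - 1) = ((2 * p).factorial : ℝ) := by
          have h2 := congrArg (Nat.cast : ℕ → ℝ) hcard
          push_cast [Nat.cast_sub (show 1 ≤ 2 * p by omega)] at h2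
          linarith [h2]
        have hfac : (0:ℝ) < ((2 * p).factorial : ℝ) := by positivity
        have hp1 : (1:ℝ) ≤ (p : ℝ) := by exact_mod_cast hp
        have h2p1 : (0:ℝ) < 2 * (p : ℝ) - 1 := by linarith
        field_simp
        linarith [hcast]

end BL

/-- Geometric Brascamp–Lieb inequality for pairwise coordinate projections: for `p ∈ ℕ` and
`f_{j,k} ∈ L¹(𝕋² × 𝕋²)`, `1 ≤ j < k ≤ 2p`,
`∫_{(𝕋²)^{2p}} ∏_{j<k} |f_{j,k}(x_j, x_k)|^{1/(2p-1)} dx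
  ≤ C ∏_{j<k} (∫ |f_{j,k}|)^{1/(2p-1)}`. -/
theorem geometric_brascamp_lieb_pairs (p : ℕ) (hp : 1 ≤ p) :
    ∃ C > 0, ∀ f : Fin (2 * p) × Fin (2 * p) → (Torus2 × Torus2 → ℝ),
      (∀ q, Measurable (f q)) →
      (∫⁻ x : Fin (2 * p) → Torus2,
          ∏ q ∈ Finset.univ.filter (fun q : Fin (2 * p) × Fin (2 * p) => q.1 < q.2),
            ENNReal.ofReal (|f q (x q.1, x q.2)| ^ ((1 : ℝ) / (2 * (p : ℝ) - 1))))
        ≤ ENNReal.ofReal C *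
            ∏ q ∈ Finset.univ.filter (fun q : Fin (2 * p) × Fin (2 * p) => q.1 < q.2),
              (∫⁻ z : Torus2 × Torus2, ENNReal.ofReal |f q z|) ^ ((1 : ℝ) / (2 * (p : ℝ) - 1)) := by
  classical
  refine ⟨1, one_pos, fun f hf => ?_⟩
  have hp1 : (1:ℝ) ≤ (p : ℝ) := by exact_mod_cast hp
  have hθ : (0:ℝ) ≤ (1 : ℝ) / (2 * (p : ℝ) - 1) := by
    apply div_nonneg zero_le_one; linarith
  have hw : (0:ℝ) ≤ (((2 * p).factorial : ℝ))⁻¹ := by positivity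
  set G : Fin (2 * p) × Fin (2 * p) → (Fin (2 * p) → Torus2) → ℝ≥0∞ :=
    fun q x => ENNReal.ofReal |f q (x q.1, x q.2)| with hG
  have hGmeas : ∀ q, Measurable (G q) := fun q =>
    ((hf q).comp ((measurable_pi_apply _).prodMk (measurable_pi_apply _))).abs.ennreal_ofReal
  have fubini : ∀ σ : Equiv.Perm (Fin (2 * p)),
      ∫⁻ x : Fin (2 * p) → Torus2, ∏ a : Fin p, G (BL.phiPair p (σ, a)) x
        = ∏ a : Fin p, ∫⁻ z : Torus2 × Torus2, ENNReal.ofReal |f (BL.phiPair p (σ, a)) z| := by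
    intro σ
    set H : Fin p → Torus2 × Torus2 → ℝ≥0∞ := fun a =>
      if σ (BL.pairIdx p (.inl a)) < σ (BL.pairIdx p (.inr a))
      then fun z => ENNReal.ofReal |f (BL.phiPair p (σ, a)) z|
      else fun z => ENNReal.ofReal |f (BL.phiPair p (σ, a)) z.swap| with hH
    have hHmeas : ∀ a, Measurable (H a) := by
      intro a
      rw [hH]
      dsimp only
      split_ifs
      · exact (hf _).abs.ennreal_ofReal
      · exact ((hf _).comp measurable_swap).abs.ennreal_ofReal
    have hpt : ∀ (x : Fin (2 * p) → Torus2) (a : Fin p),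
        G (BL.phiPair p (σ, a)) x
          = H a (x (((BL.pairIdx p).trans σ) (.inl a)),
              x (((BL.pairIdx p).trans σ) (.inr a))) := by
      intro x a
      by_cases hlt : σ (BL.pairIdx p (.inl a)) < σ (BL.pairIdx p (.inr a)) <;>
        simp [hG, hH, BL.phiPair, hlt, Equiv.trans_apply]
    calc ∫⁻ x : Fin (2 * p) → Torus2, ∏ a : Fin p, G (BL.phiPair p (σ, a)) x
        = ∫⁻ x : Fin (2 * p) → Torus2, ∏ a : Fin p,
            H a (x (((BL.pairIdx p).trans σ) (.inl a)),
              x (((BL.pairIdx p).trans σ) (.inr a))) :=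
          lintegral_congr fun x => Finset.prod_congr rfl fun a _ => hpt x a
      _ = ∏ a : Fin p, ∫⁻ z : Torus2 × Torus2, H a z :=
          BL.lintegral_pair_prod ((BL.pairIdx p).trans σ) H hHmeas
      _ = ∏ a : Fin p, ∫⁻ z : Torus2 × Torus2, ENNReal.ofReal |f (BL.phiPair p (σ, a)) z| := by
          refine Finset.prod_congr rfl fun a _ => ?_
          rw [hH]
          dsimp only
          split_ifs with hlt
          · rfl
          · rw [Measure.volume_eq_prod,
              lintegral_prod_swap (fun z => ENNReal.ofReal |f (BL.phiPair p (σ, a)) z|)]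
  have hsum : ∑ _σ : Equiv.Perm (Fin (2 * p)), (((2 * p).factorial : ℝ))⁻¹ = 1 := by
    rw [Finset.sum_const, Finset.card_univ, Fintype.card_perm, Fintype.card_fin, nsmul_eq_mul]
    have : (0:ℝ) < ((2 * p).factorial : ℝ) := by positivity
    field_simp
  have holder := ENNReal.lintegral_prod_norm_pow_le (μ := (volume : Measure (Fin (2 * p) → Torus2)))
    Finset.univ
    (f := fun (σ : Equiv.Perm (Fin (2 * p))) (x : Fin (2 * p) → Torus2) =>
      ∏ a : Fin p, G (BL.phiPair p (σ, a)) x)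
    (fun σ _ => (Finset.measurable_prod Finset.univ
      (fun a _ => hGmeas (BL.phiPair p (σ, a)))).aemeasurable)
    (p := fun _ => (((2 * p).factorial : ℝ))⁻¹) hsum (fun _ _ => hw)
  calc ∫⁻ x : Fin (2 * p) → Torus2,
          ∏ q ∈ Finset.univ.filter (fun q : Fin (2 * p) × Fin (2 * p) => q.1 < q.2),
            ENNReal.ofReal (|f q (x q.1, x q.2)| ^ ((1 : ℝ) / (2 * (p : ℝ) - 1)))
      = ∫⁻ x : Fin (2 * p) → Torus2, ∏ σ : Equiv.Perm (Fin (2 * p)),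
          (∏ a : Fin p, G (BL.phiPair p (σ, a)) x) ^ (((2 * p).factorial : ℝ))⁻¹ := by
        refine lintegral_congr fun x => ?_
        rw [BL.regroup p hp (fun q => G q x)]
        exact Finset.prod_congr rfl fun q _ =>
          by rw [ENNReal.ofReal_rpow_of_nonneg (abs_nonneg _) hθ]
    _ ≤ ∏ σ : Equiv.Perm (Fin (2 * p)),
          (∫⁻ x : Fin (2 * p) → Torus2, ∏ a : Fin p, G (BL.phiPair p (σ, a)) x)
            ^ (((2 * p).factorial : ℝ))⁻¹ := holder
    _ = ∏ σ : Equiv.Perm (Fin (2 * p)),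
          (∏ a : Fin p, ∫⁻ z : Torus2 × Torus2, ENNReal.ofReal |f (BL.phiPair p (σ, a)) z|)
            ^ (((2 * p).factorial : ℝ))⁻¹ := by
        exact Finset.prod_congr rfl fun σ _ => by rw [fubini σ]
    _ = ∏ q ∈ Finset.univ.filter (fun q : Fin (2 * p) × Fin (2 * p) => q.1 < q.2),
          (∫⁻ z : Torus2 × Torus2, ENNReal.ofReal |f q z|) ^ ((1 : ℝ) / (2 * (p : ℝ) - 1)) :=
        BL.regroup p hp (fun q => ∫⁻ z : Torus2 × Torus2, ENNReal.ofReal |f q z|)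
    _ = ENNReal.ofReal 1 *
          ∏ q ∈ Finset.univ.filter (fun q : Fin (2 * p) × Fin (2 * p) => q.1 < q.2),
            (∫⁻ z : Torus2 × Torus2, ENNReal.ofReal |f q z|)
              ^ ((1 : ℝ) / (2 * (p : ℝ) - 1)) := by
        rw [ENNReal.ofReal_one, one_mul]

end
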